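/- Suppose K is self-adjoint. If w̃^k = (ũ₀^k, p̃^k) ∈ W satisfies the prediction variational inequality φ(u₀) − φ(ũ₀^k) + ⟨w − w̃^k, F(w̃^k) + G(w̃^k − w^k)⟩ ≥ 0 for all w = (u₀, p) ∈ W, and w^{k+1} = w^k − D(w^k − w̃^k), then for all w = (u₀, p) ∈ W: φ(u₀) − φ(ũ₀^k) + ⟨w − w̃^k, F(w̃^k)⟩ ≥ ½(‖w − w^{k+1}‖²_K − ‖w − w^k‖²_K) + ½‖w^k − w̃^k‖²_N. -/
import Mathlib


open scoped InnerProductSpace RealInnerProductSpace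

noncomputable section

/-- The product space `W = H × H` equipped with the Hilbert space structure
`⟨(u,p),(u',p')⟩ = ⟨u,u'⟩ + ⟨p,p'⟩`. -/
abbrev W (H : Type*) [NormedAddCommGroup H] [InnerProductSpace ℝ H] := WithLp 2 (H × H)

/-- The canonical (linear homeomorphism) identification of `W` with the plain product. -/
def eW (H : Type*) [NormedAddCommGroup H] [InnerProductSpace ℝ H] :
    W H ≃L[ℝ] H × H := WithLp.prodContinuousLinearEquiv 2 ℝ H H

variable {H : Type*} [NormedAddCommGroup H] [InnerProductSpace ℝ H] [CompleteSpace H]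

/-- The block diagonal operator `D(u,p) = (ρu, σp)` on `W`. -/
def opD (H : Type*) [NormedAddCommGroup H] [InnerProductSpace ℝ H] (ρ σ : ℝ) :
    W H →L[ℝ] W H :=
  ((eW H).symm.toContinuousLinearMap.comp
    ((ρ • ContinuousLinearMap.fst ℝ H H).prod (σ • ContinuousLinearMap.snd ℝ H H))).comp
    (eW H).toContinuousLinearMap

/-- The block operator `G(u,p) = ((1/r)u − ℒ*p, −θℒu + (1/s)p)` on `W`. -/
def opG (L : H →L[ℝ] H) (r s θ : ℝ) : W H →L[ℝ] W H :=
  ((eW H).symm.toContinuousLinearMap.comp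
    (((1 / r) • ContinuousLinearMap.fst ℝ H H
        - (ContinuousLinearMap.adjoint L).comp (ContinuousLinearMap.snd ℝ H H)).prod
      ((-θ) • (L.comp (ContinuousLinearMap.fst ℝ H H))
        + (1 / s) • ContinuousLinearMap.snd ℝ H H))).comp
    (eW H).toContinuousLinearMap

/-- The operator `K = G ∘ D⁻¹`. -/
def opK (L : H →L[ℝ] H) (r s θ ρ σ : ℝ) : W H →L[ℝ] W H :=
  (opG L r s θ).comp (opD H ρ⁻¹ σ⁻¹)

/-- The operator `N = G + G* − D* ∘ K ∘ D`. -/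
def opN (L : H →L[ℝ] H) (r s θ ρ σ : ℝ) : W H →L[ℝ] W H :=
  opG L r s θ + ContinuousLinearMap.adjoint (opG L r s θ)
    - ((ContinuousLinearMap.adjoint (opD H ρ σ)).comp
        ((opK L r s θ ρ σ).comp (opD H ρ σ)))

/-- The map `F(u₀, p) = (τu₀ + ℒ*p, p − ℒu₀ + u_T)` on `W`. -/
def Fmap (L : H →L[ℝ] H) (uT : H) (τ : ℝ) : W H → W H := fun w =>
  (eW H).symm (τ • ((eW H) w).1 + ContinuousLinearMap.adjoint L ((eW H) w).2,
               ((eW H) w).2 - L ((eW H) w).1 + uT)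

/-- `‖w‖²_A = ⟨Aw, w⟩` for an operator `A` on `W`. -/
def normSq (A : W H →L[ℝ] W H) (w : W H) : ℝ := ⟪A w, w⟫_ℝ

/-- A saddle point `w* = (u₀*, p*)`: `φ(u₀) − φ(u₀*) + ⟨w − w*, F(w*)⟩ ≥ 0` for all `w`. -/
def IsSaddle (L : H →L[ℝ] H) (uT : H) (τ : ℝ) (φ : H → ℝ) (wstar : W H) : Prop :=
  ∀ w : W H, φ ((eW H w).1) - φ ((eW H wstar).1)
      + ⟪w - wstar, Fmap L uT τ wstar⟫_ℝ ≥ 0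

/-- The prediction variational inequality satisfied by `w̃` given `wᵏ`:
`φ(u₀) − φ(ũ₀) + ⟨w − w̃, F(w̃) + G(w̃ − wᵏ)⟩ ≥ 0` for all `w`. -/
def PredVI (L : H →L[ℝ] H) (uT : H) (τ : ℝ) (φ : H → ℝ) (r s θ : ℝ)
    (wk wt : W H) : Prop :=
  ∀ w : W H, φ ((eW H w).1) - φ ((eW H wt).1)
      + ⟪w - wt, Fmap L uT τ wt + opG L r s θ (wt - wk)⟫_ℝ ≥ 0

end

/-- Key estimate: if `K` is self-adjoint, `w̃ᵏ` satisfies the prediction VI and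
`wᵏ⁺¹ = wᵏ − D(wᵏ − w̃ᵏ)`, then for all `w`,
`φ(u₀) − φ(ũ₀ᵏ) + ⟨w − w̃ᵏ, F(w̃ᵏ)⟩ ≥ ½(‖w − wᵏ⁺¹‖²_K − ‖w − wᵏ‖²_K) + ½‖wᵏ − w̃ᵏ‖²_N`. -/
theorem predVI_key_estimate
    {H : Type*} [NormedAddCommGroup H] [InnerProductSpace ℝ H] [CompleteSpace H]
    (L : H →L[ℝ] H) (uT : H) (τ β : ℝ) (hτ : 0 < τ) (hβ : 0 ≤ β)
    (φ : H → ℝ) (hφ : ConvexOn ℝ Set.univ φ)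
    (r s θ ρ σ : ℝ) (hr : 0 < r) (hs : 0 < s) (hθ : θ ∈ Set.Ioc (0 : ℝ) 1)
    (hρ : 0 < ρ) (hσ : 0 < σ)
    (hK : IsSelfAdjoint (opK L r s θ ρ σ))
    (wk wt wk1 : W H)
    (hVI : PredVI L uT τ φ r s θ wk wt)
    (hcorr : wk1 = wk - opD H ρ σ (wk - wt)) :
    ∀ w : W H,
      φ ((eW H w).1) - φ ((eW H wt).1) + ⟪w - wt, Fmap L uT τ wt⟫_ℝ
        ≥ (1 / 2) * (normSq (opK L r s θ ρ σ) (w - wk1) - normSq (opK L r s θ ρ σ) (w - wk))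
          + (1 / 2) * normSq (opN L r s θ ρ σ) (wk - wt) := by
  intro w
  set Kop := opK L r s θ ρ σ with hKop
  set Gop := opG L r s θ with hGop
  set Dop := opD H ρ σ with hDop
  set d := wk - wt with hd
  have hDD : ∀ x : W H, opD H ρ⁻¹ σ⁻¹ (Dop x) = x := by
    intro x
    simp [hDop, opD, smul_smul, inv_mul_cancel₀ hρ.ne', inv_mul_cancel₀ hσ.ne']
  have hKD : ∀ x : W H, Kop (Dop x) = Gop x := by
    intro x
    rw [hKop, opK, ContinuousLinearMap.comp_apply, hDD]
  have hsym : ∀ x y : W H, ⟪Kop x, y⟫_ℝ = ⟪x, Kop y⟫_ℝ := fun x y => hK.isSymmetric x y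
  have h' : φ ((eW H w).1) - φ ((eW H wt).1) + ⟪w - wt, Fmap L uT τ wt⟫_ℝ
      ≥ ⟪w - wt, Gop d⟫_ℝ := by
    have h := hVI w
    rw [inner_add_right] at h
    have hneg : Gop (wt - wk) = -(Gop d) := by
      rw [← map_neg]; congr 1; rw [hd]; abel
    rw [hneg, inner_neg_right] at h
    linarith
  have e1 : normSq Kop (w - wk1)
      = normSq Kop (w - wk) + 2 * ⟪Gop d, w - wk⟫_ℝ + ⟪Gop d, Dop d⟫_ℝ := by
    unfold normSq
    rw [hcorr, show w - (wk - Dop (wk - wt)) = (w - wk) + Dop d from by rw [hd]; abel]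
    rw [map_add, inner_add_left, inner_add_right, inner_add_right, hKD]
    have h1 : ⟪Kop (w - wk), Dop d⟫_ℝ = ⟪Gop d, w - wk⟫_ℝ := by
      rw [hsym, hKD, real_inner_comm]
    have h2 : ⟪Gop d, w - wk⟫_ℝ = ⟪w - wk, Gop d⟫_ℝ := real_inner_comm _ _
    linarith
  have e2 : normSq (opN L r s θ ρ σ) d = 2 * ⟪Gop d, d⟫_ℝ - ⟪Gop d, Dop d⟫_ℝ := by
    unfold normSq opN
    simp only [ContinuousLinearMap.sub_apply, ContinuousLinearMap.add_apply,
      ContinuousLinearMap.comp_apply, inner_sub_left, inner_add_left]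
    rw [ContinuousLinearMap.adjoint_inner_left, ContinuousLinearMap.adjoint_inner_left,
      ← hGop, ← hKop, ← hDop, hKD, real_inner_comm d (Gop d)]
    ring
  have e3 : ⟪Gop d, w - wk⟫_ℝ + ⟪Gop d, d⟫_ℝ = ⟪w - wt, Gop d⟫_ℝ := by
    rw [← inner_add_right, show (w - wk) + d = w - wt from by rw [hd]; abel,
      real_inner_comm]
  rw [e1, e2]
  linarith
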